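/- arXiv:1603.09735 — 7 statements merged into one kernel-verified Lean document; each statement's English description precedes it below -/
import Mathlib

section
/- There exists a unimodular 18×18 integer matrix U such that ᵗU M_0 U = E_8(-1) ⊕ E_8(-1) ⊕ [[2,1],[1,-2]], where M_0 is as defined. Hence the lattice with Gram matrix M_0 is isomorphic over ℤ to E_8(-1) ⊕ E_8(-1) ⊕ [[2,1],[1,-2]]. -/
open Matrix

noncomputable section

def A18 : Matrix (Fin 18) (Fin 18) ℤ :=
  Matrix.of fun i j => if i = j then -2 else if i.val + 1 = j.val ∨ j.val + 1 = i.val then 1 else 0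

def E (i j : Fin 18) : Matrix (Fin 18) (Fin 18) ℤ := Matrix.single i j 1

def M0 : Matrix (Fin 18) (Fin 18) ℤ :=
  A18 + 2 • E 16 16 - (E 5 6 + E 6 5) + (E 4 6 + E 6 4) - (E 13 14 + E 14 13)
    + (E 12 14 + E 14 12) - (E 7 8 + E 8 7) - (E 15 16 + E 16 15)
    + (E 5 16 + E 16 5) + (E 7 15 + E 15 7) + (E 13 16 + E 16 13)

def E8neg : Matrix (Fin 8) (Fin 8) ℤ :=
  !![-2,1,0,0,0,0,0,0; 1,-2,1,0,0,0,0,0; 0,1,-2,1,0,0,0,0; 0,0,1,-2,1,0,0,0;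
     0,0,0,1,-2,1,1,0; 0,0,0,0,1,-2,0,0; 0,0,0,0,1,0,-2,1; 0,0,0,0,0,0,1,-2]

def e18 : (Fin 8 ⊕ (Fin 8 ⊕ Fin 2)) ≃ Fin 18 :=
  (Equiv.sumCongr (Equiv.refl (Fin 8)) finSumFinEquiv).trans finSumFinEquiv

def target0 : Matrix (Fin 18) (Fin 18) ℤ :=
  Matrix.reindex e18 e18
    (Matrix.fromBlocks E8neg 0 0 (Matrix.fromBlocks E8neg 0 0 !![2,1;1,-2]))

/-!
Indices run from 0. The vectors e₀, …, e₇ already span a copy of E₈(-1), and e₈, …, e₁₄ span a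
second E₈(-1) diagram minus its end node. The root u below is orthogonal to e₀, …, e₁₃ and e₁₇
with u ⬝ e₁₄ = 1, so it completes the second copy; v and e₁₇ span the plane [[2,1],[1,-2]],
orthogonal to both copies. Replacing e₁₅, e₁₆ by u, v is unimodular since it has an integral
inverse.
-/

theorem Matrix.det_eq_one_or_eq_neg_one_of_mul_eq_one {n : Type*} [Fintype n] [DecidableEq n]
    {U V : Matrix n n ℤ} (h : U * V = 1) : U.det = 1 ∨ U.det = -1 :=
  Int.isUnit_iff.mp (isUnit_det_of_right_inverse h)

def basisChange : Matrix (Fin 18) (Fin 18) ℤ :=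
  ((1 : Matrix (Fin 18) (Fin 18) ℤ)
    |>.updateCol 15 ![0, 0, 0, 0, 0, -1, 1, 2, 0, 0, 0, 0, 0, -1, 1, 3, -2, -1])
    |>.updateCol 16 ![1, 2, 3, 4, 5, 5, 1, -3, -1, -2, -3, -4, -5, 0, -6, -7, 5, 2]

def basisChangeInv : Matrix (Fin 18) (Fin 18) ℤ :=
  ((1 : Matrix (Fin 18) (Fin 18) ℤ)
    |>.updateCol 15 ![-2, -4, -6, -8, -10, -5, -7, -4, 2, 4, 6, 8, 10, 5, 7, 5, 2, 1])
    |>.updateCol 16 ![-3, -6, -9, -12, -15, -8, -10, -5, 3, 6, 9, 12, 15, 7, 11, 7, 3, 1]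

theorem basisChange_mul_basisChangeInv : basisChange * basisChangeInv = 1 := by
  decide

theorem basisChange_transpose_mul_M0_mul_basisChange :
    basisChangeᵀ * M0 * basisChange = target0 := by
  decide

theorem stmt2 : ∃ U : Matrix (Fin 18) (Fin 18) ℤ,
    (U.det = 1 ∨ U.det = -1) ∧ Uᵀ * M0 * U = target0 :=
  ⟨basisChange, det_eq_one_or_eq_neg_one_of_mul_eq_one basisChange_mul_basisChangeInv,
    basisChange_transpose_mul_M0_mul_basisChange⟩
end
end

section
/- The surface in ℂ³ defined by xyz²(x+y+z+1) + λxyz + μ = 0 is birationally equivalent to the surface defined by y₁² = 4x₀³ + (λ² + 2λz + z² + 2λz² + 2z³ + z⁴)x₀² + (-2λμz - 2μz² - 2μz³)x₀ + μ²z². Explicitly, the substitution x = -μ/x₀, y = (-λx₀ - y₁ + μz - x₀z - x₀z²)/(2x₀z) transforms the first equation into the second (up to a nonzero rational factor). -/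
/-!
The surface equation is quadratic in `y`. Its roots are `y = (-B ± √Δ) / (2A)`, and after
`x = -μ/x₀` the substitution writes `±√Δ` as a multiple of `y₁`, while the discriminant `Δ`,
cleared of denominators, is the Weierstrass cubic in `x₀`. Concretely the substituted equation is
`-μ / (4 x₀³)` times `y₁² - (cubic)`, a rational identity valid whenever `2`, `x₀`, `z` are
invertible; the factor is nonzero as soon as `μ ≠ 0`.
-/

section

variable {K : Type*} [Field K]

theorem four_ne_zero_of_two_ne_zero (h2 : (2 : K) ≠ 0) : (4 : K) ≠ 0 := by
  simpa only [show (4 : K) = 2 * 2 by norm_num] using mul_ne_zero h2 h2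

def cubicSurface (lam mu x y z : K) : K :=
  x * y * z ^ 2 * (x + y + z + 1) + lam * x * y * z + mu

def weierstrassCubic (lam mu z x₀ : K) : K :=
  4 * x₀ ^ 3 + (lam ^ 2 + 2 * lam * z + z ^ 2 + 2 * lam * z ^ 2 + 2 * z ^ 3 + z ^ 4) * x₀ ^ 2
    + (-2 * lam * mu * z - 2 * mu * z ^ 2 - 2 * mu * z ^ 3) * x₀ + mu ^ 2 * z ^ 2

theorem cubicSurface_substitution {lam mu x₀ y₁ z : K} (h2 : (2 : K) ≠ 0) (hx₀ : x₀ ≠ 0)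
    (hz : z ≠ 0) :
    cubicSurface lam mu (-mu / x₀) ((-lam * x₀ - y₁ + mu * z - x₀ * z - x₀ * z ^ 2) / (2 * x₀ * z)) z
      = -mu / (4 * x₀ ^ 3) * (y₁ ^ 2 - weierstrassCubic lam mu z x₀) := by
  have h4 := four_ne_zero_of_two_ne_zero h2
  unfold cubicSurface weierstrassCubic
  field_simp
  ring

theorem cubicSurface_substitution_eq_zero_iff {lam mu x₀ y₁ z : K} (h2 : (2 : K) ≠ 0)
    (hx₀ : x₀ ≠ 0) (hz : z ≠ 0) (hmu : mu ≠ 0) :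
    cubicSurface lam mu (-mu / x₀) ((-lam * x₀ - y₁ + mu * z - x₀ * z - x₀ * z ^ 2) / (2 * x₀ * z)) z
        = 0 ↔ y₁ ^ 2 = weierstrassCubic lam mu z x₀ := by
  have hfactor : -mu / (4 * x₀ ^ 3) ≠ 0 :=
    div_ne_zero (neg_ne_zero.mpr hmu)
      (mul_ne_zero (four_ne_zero_of_two_ne_zero h2) (pow_ne_zero 3 hx₀))
  rw [cubicSurface_substitution h2 hx₀ hz, mul_eq_zero_iff_left hfactor, sub_eq_zero]

end

theorem stmt5 : ∀ lam mu x₀ y₁ z : ℂ, x₀ ≠ 0 → z ≠ 0 → mu ≠ 0 →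
    ((-mu / x₀) * ((-lam * x₀ - y₁ + mu * z - x₀ * z - x₀ * z ^ 2) / (2 * x₀ * z)) * z ^ 2
        * ((-mu / x₀) + ((-lam * x₀ - y₁ + mu * z - x₀ * z - x₀ * z ^ 2) / (2 * x₀ * z)) + z + 1)
      + lam * (-mu / x₀) * ((-lam * x₀ - y₁ + mu * z - x₀ * z - x₀ * z ^ 2) / (2 * x₀ * z)) * z
      + mu = 0
    ↔ y₁ ^ 2 = 4 * x₀ ^ 3 + (lam ^ 2 + 2 * lam * z + z ^ 2 + 2 * lam * z ^ 2 + 2 * z ^ 3 + z ^ 4) * x₀ ^ 2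
        + (-2 * lam * mu * z - 2 * mu * z ^ 2 - 2 * mu * z ^ 3) * x₀ + mu ^ 2 * z ^ 2) :=
  fun _ _ _ _ _ hx₀ hz hmu => cubicSurface_substitution_eq_zero_iff two_ne_zero hx₀ hz hmu
end

section
/- Under the substitution x = -2x₁²y₁/(-4λx₁³ + μy₁ + x₁y₁ + z₁), y = y₁²/(2x₁(-4λx₁³ + μy₁ + x₁y₁ + z₁)), z = -(-4λx₁³ + μy₁ + x₁y₁ + z₁)/(2x₁y₁), the equation xyz(x+y+z+1) + λx + μy = 0 is transformed (up to a nonzero rational factor) into z₁² = y₁³ + (μ² + 2μx₁ + x₁² - 4x₁³)y₁² + (-8λμx₁³ - 8λx₁⁴)y₁ + 16λ²x₁⁶. -/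
theorem surface_subst_eq_div {K : Type*} [Field K] (h2 : (2 : K) ≠ 0)
    {lam mu x₁ y₁ D : K} (hx : x₁ ≠ 0) (hy : y₁ ≠ 0) (hD : D ≠ 0) :
    -(2 * x₁ ^ 2 * y₁) / D * (y₁ ^ 2 / (2 * x₁ * D)) * (-D / (2 * x₁ * y₁))
        * (-(2 * x₁ ^ 2 * y₁) / D + y₁ ^ 2 / (2 * x₁ * D) + -D / (2 * x₁ * y₁) + 1)
        + lam * (-(2 * x₁ ^ 2 * y₁) / D) + mu * (y₁ ^ 2 / (2 * x₁ * D))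
      = y₁ * (y₁ ^ 3 - 4 * x₁ ^ 3 * y₁ ^ 2 - D ^ 2
          + 2 * (-4 * lam * x₁ ^ 3 + mu * y₁ + x₁ * y₁) * D) / (4 * x₁ * D ^ 2) := by
  have h4 : (4 : K) ≠ 0 := by
    rw [show (4 : K) = 2 * 2 by norm_num]
    exact mul_ne_zero h2 h2
  field_simp
  ring

theorem stmt6 : ∀ lam mu x₁ y₁ z₁ : ℂ, x₁ ≠ 0 → y₁ ≠ 0 →
    ∀ hD : -4 * lam * x₁ ^ 3 + mu * y₁ + x₁ * y₁ + z₁ ≠ 0,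
    (let D := -4 * lam * x₁ ^ 3 + mu * y₁ + x₁ * y₁ + z₁
     let x := -(2 * x₁ ^ 2 * y₁) / D
     let y := y₁ ^ 2 / (2 * x₁ * D)
     let z := -D / (2 * x₁ * y₁)
     x * y * z * (x + y + z + 1) + lam * x + mu * y = 0
    ↔ z₁ ^ 2 = y₁ ^ 3 + (mu ^ 2 + 2 * mu * x₁ + x₁ ^ 2 - 4 * x₁ ^ 3) * y₁ ^ 2
        + (-8 * lam * mu * x₁ ^ 3 - 8 * lam * x₁ ^ 4) * y₁ + 16 * lam ^ 2 * x₁ ^ 6) := by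
  intro lam mu x₁ y₁ z₁ hx hy hD D x y z
  -- with `w := -4λx₁³ + μy₁ + x₁y₁` and `D = w + z₁`, completing the square gives `2wD - D² = w² - z₁²`
  have hnum : y₁ ^ 3 - 4 * x₁ ^ 3 * y₁ ^ 2 - D ^ 2
      + 2 * (-4 * lam * x₁ ^ 3 + mu * y₁ + x₁ * y₁) * D
      = y₁ ^ 3 + (mu ^ 2 + 2 * mu * x₁ + x₁ ^ 2 - 4 * x₁ ^ 3) * y₁ ^ 2
        + (-8 * lam * mu * x₁ ^ 3 - 8 * lam * x₁ ^ 4) * y₁ + 16 * lam ^ 2 * x₁ ^ 6 - z₁ ^ 2 := by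
    simp only [D]
    ring
  have hD' : D ≠ 0 := hD
  rw [surface_subst_eq_div two_ne_zero hx hy hD', hnum, div_eq_zero_iff, mul_eq_zero,
    sub_eq_zero, eq_comm (a := z₁ ^ 2)]
  simp [hx, hy, hD']
end

section
/- The formal power series η₀(λ,μ) = Σ_{n,m≥0} (-1)^m · (5m+2n)!/(n!·(m!)³·(2m+n)!) · λⁿμᵐ satisfies D₁η₀ = 0, where D₁ = θ_λ(θ_λ + 2θ_μ) - λ(2θ_λ + 5θ_μ + 1)(2θ_λ + 5θ_μ + 2), θ_λ = λ∂/∂λ, θ_μ = μ∂/∂μ. -/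
/-! The coefficient of λⁿ⁺¹μᵐ in D₁η₀ relates only c0 (n+1) m and c0 n m, so the identity is the
hypergeometric recurrence of c0 in n, read off from (k+1)! = (k+1)·k! for the three factorials
that depend on n. -/

open Nat

noncomputable def c0 (n m : ℕ) : ℚ :=
  (-1) ^ m * ((5 * m + 2 * n)! : ℚ) / ((n ! : ℚ) * ((m ! : ℚ)) ^ 3 * ((2 * m + n)! : ℚ))

theorem c0_succ_left (n m : ℕ) :
    ((n : ℚ) + 1) * ((n : ℚ) + 1 + 2 * m) * c0 (n + 1) m
      = (2 * n + 5 * m + 1) * (2 * n + 5 * m + 2) * c0 n m := by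
  have top :
      (5 * m + 2 * (n + 1))! = (5 * m + 2 * n + 2) * (5 * m + 2 * n + 1) * (5 * m + 2 * n)! := by
    rw [show 5 * m + 2 * (n + 1) = 5 * m + 2 * n + 1 + 1 by ring, factorial_succ, factorial_succ,
      mul_assoc]
  have bottom : (2 * m + (n + 1))! = (2 * m + n + 1) * (2 * m + n)! := factorial_succ _
  simp only [c0, top, bottom, factorial_succ n]
  have := factorial_ne_zero n
  have := factorial_ne_zero m
  have := factorial_ne_zero (2 * m + n)
  push_cast
  field_simp
  ring

/-- D₁η₀ = 0 coefficientwise, D₁ = θ_λ(θ_λ+2θ_μ) − λ(2θ_λ+5θ_μ+1)(2θ_λ+5θ_μ+2). -/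
theorem stmt8 : ∀ n m : ℕ,
    (n : ℚ) * ((n : ℚ) + 2 * m) * c0 n m
      - (if n = 0 then 0
         else (2 * ((n : ℚ) - 1) + 5 * m + 1) * (2 * ((n : ℚ) - 1) + 5 * m + 2) * c0 (n - 1) m)
      = 0 := by
  intro n m
  cases n with
  | zero => simp
  | succ n =>
    rw [if_neg n.succ_ne_zero, Nat.add_sub_cancel]
    push_cast
    linear_combination c0_succ_left n m
end

section
/- The formal power series η₀(λ,μ) = Σ_{n,m≥0} (-1)^m · (5m+2n)!/(n!·(m!)³·(2m+n)!) · λⁿμᵐ satisfies D₂η₀ = 0, where D₂ = λ²θ_μ³ + μθ_λ(θ_λ - 1)(2θ_λ + 5θ_μ + 1), with θ_λ = λ∂/∂λ, θ_μ = μ∂/∂μ. -/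
open Nat

/- Both sides share the factor `(2m + n + 2)!`; the remaining factorials differ by one step
in `5m + 2n + 4`, in `m` (cubed) and two steps in `n`. -/
theorem cube_mul_c0_succ (n m : ℕ) :
    ((m : ℚ) + 1) ^ 3 * c0 n (m + 1)
      = -((n + 2) * (n + 1) * (2 * n + 5 * m + 5)) * c0 (n + 2) m := by
  have h5 : 5 * (m + 1) + 2 * n = (5 * m + 2 * (n + 2)) + 1 := by ring
  have h2 : 2 * (m + 1) + n = 2 * m + (n + 2) := by ring
  simp only [c0]
  rw [h5, h2, factorial_succ (5 * m + 2 * (n + 2)), factorial_succ m,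
    factorial_succ (n + 1), factorial_succ n]
  have hn : (n ! : ℚ) ≠ 0 := by positivity
  have hm : (m ! : ℚ) ≠ 0 := by positivity
  have hnm : ((2 * m + (n + 2))! : ℚ) ≠ 0 := by positivity
  push_cast
  field_simp
  ring

/-- D₂η₀ = 0 coefficientwise, D₂ = λ²θ_μ³ + μθ_λ(θ_λ−1)(2θ_λ+5θ_μ+1). -/
theorem stmt9 : ∀ n m : ℕ,
    (if 2 ≤ n then (m : ℚ) ^ 3 * c0 (n - 2) m else 0)
      + (if 1 ≤ m then
            (n : ℚ) * ((n : ℚ) - 1) * (2 * n + 5 * ((m : ℚ) - 1) + 1) * c0 n (m - 1)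
          else 0)
      = 0 := by
  intro n m
  rcases Nat.lt_or_ge n 2 with hn | hn
  · interval_cases n <;> simp
  obtain ⟨a, rfl⟩ : ∃ a, n = a + 2 := ⟨n - 2, by omega⟩
  rcases m with _ | b
  · simp
  rw [if_pos hn, if_pos (by omega), Nat.add_sub_cancel, Nat.add_sub_cancel]
  push_cast
  rw [cube_mul_c0_succ]
  ring
end

section
/- The formal power series η₁(λ,μ) = Σ_{n,m≥0} (-1)^{n+m} · (3n+3m)!/((n!)²(m!)²(n+m)!) · λⁿμᵐ satisfies (λθ_μ² - μθ_λ²)η₁ = 0, where θ_λ = λ∂/∂λ, θ_μ = μ∂/∂μ. -/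
open Nat

noncomputable def c1 (n m : ℕ) : ℚ :=
  (-1) ^ (n + m) * ((3 * n + 3 * m)! : ℚ)
    / (((n ! : ℚ)) ^ 2 * ((m ! : ℚ)) ^ 2 * ((n + m)! : ℚ))

theorem c1_comm (n m : ℕ) : c1 n m = c1 m n := by
  unfold c1
  rw [add_comm n m, add_comm (3 * n)]
  ring

theorem sq_mul_c1_succ_right (n m : ℕ) :
    ((m : ℚ) + 1) ^ 2 * c1 n (m + 1) =
      (-1) ^ (n + m + 1) * ((3 * n + 3 * m + 3)! : ℚ)
        / ((n ! : ℚ) ^ 2 * (m ! : ℚ) ^ 2 * ((n + m + 1)! : ℚ)) := by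
  rw [c1, factorial_succ m, ← add_assoc, mul_add, mul_one, ← add_assoc]
  push_cast
  field_simp

theorem sq_mul_c1_succ_right_eq_sq_mul_c1_succ_left (n m : ℕ) :
    ((m : ℚ) + 1) ^ 2 * c1 n (m + 1) = ((n : ℚ) + 1) ^ 2 * c1 (n + 1) m := by
  rw [c1_comm (n + 1) m, sq_mul_c1_succ_right, sq_mul_c1_succ_right, add_comm m n,
    add_comm (3 * m)]
  ring

/-- (λθ_μ² − μθ_λ²)η₁ = 0 coefficientwise. -/
theorem stmt10 : ∀ n m : ℕ,
    (if n = 0 then 0 else (m : ℚ) ^ 2 * c1 (n - 1) m)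
      - (if m = 0 then 0 else (n : ℚ) ^ 2 * c1 n (m - 1)) = 0 := by
  rintro (_ | n) (_ | m) <;> simp [sq_mul_c1_succ_right_eq_sq_mul_c1_succ_left]
end

section
/- The formal power series η₂(λ,μ) = Σ_{n,m≥0} (-1)^n · (4m+3n)!/((m!)²·n!·((m+n)!)²) · λⁿμᵐ satisfies D₁η₂ = 0, where D₁ = λθ_μ² + μθ_λ(3θ_λ + 4θ_μ + 1), with θ_λ = λ∂/∂λ, θ_μ = μ∂/∂μ. -/
/-!
Since θ_λ, θ_μ act on λⁿμᵐ by n and m, the coefficient of λⁿμᵐ in D₁η₂ is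
m² c(n-1, m) + n (3n + 4(m-1) + 1) c(n, m-1), a sum whose terms vanish when the shifted index
is negative. For n, m ≥ 1 the two terms are ±(4m+3n-3)·(4m+3n-4)!/((m-1)!² (n-1)! (m+n-1)!²)
with opposite signs: the two coefficients share the factor (m+n-1)!² and otherwise differ only
by the factors m², n and 4m+3n-3, which the operator's prefactors cancel.
-/

open Nat

noncomputable def c2 (n m : ℕ) : ℚ :=
  (-1) ^ n * ((4 * m + 3 * n)! : ℚ)
    / (((m ! : ℚ)) ^ 2 * (n ! : ℚ) * (((m + n)! : ℚ)) ^ 2)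

theorem c2_recurrence (n m : ℕ) :
    ((m : ℚ) + 1) ^ 2 * c2 n (m + 1)
      + ((n : ℚ) + 1) * (3 * (n + 1) + 4 * m + 1) * c2 (n + 1) m = 0 := by
  have h₁ : 4 * (m + 1) + 3 * n = (4 * m + 3 * n + 3) + 1 := by ring
  have h₂ : 4 * m + 3 * (n + 1) = 4 * m + 3 * n + 3 := by ring
  rw [c2, c2, h₁, h₂, add_right_comm m 1 n, ← add_assoc m n 1,
    factorial_succ (4 * m + 3 * n + 3), factorial_succ (m + n), factorial_succ m,
    factorial_succ n]
  push_cast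
  field_simp
  ring

/-- D₁η₂ = 0 coefficientwise, D₁ = λθ_μ² + μθ_λ(3θ_λ+4θ_μ+1). -/
theorem stmt12 : ∀ n m : ℕ,
    (if n = 0 then 0 else (m : ℚ) ^ 2 * c2 (n - 1) m)
      + (if m = 0 then 0
         else (n : ℚ) * (3 * n + 4 * ((m : ℚ) - 1) + 1) * c2 n (m - 1)) = 0 := by
  rintro (_ | n) (_ | m)
  · simp
  · simp
  · simp
  · simpa using c2_recurrence n m
end
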